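/- There exists a smallest consistent fixed point of G; that is, there exists a consistent set U ⊆ ℕ with G(U) = U such that U ⊆ U' for every consistent set U' ⊆ ℕ with G(U') = U'. -/

import Mathlib

/-- Sentences of the augmented language 𝓛. -/
inductive Sent (B : Type) : Type where
  | base : B → Sent B
  | Tr : ℕ → Sent B
  | exT : Sent B
  | allT : Sent B
  | neg : Sent B → Sent B
  | or : Sent B → Sent B → Sent B
  | and : Sent B → Sent B → Sent B
  | imp : Sent B → Sent B → Sent B
  | iff : Sent B → Sent B → Sent B

variable {B : Type}

mutual
/-- `isTrue gn v U A` means `#A ∈ G(U)` according to rules (r1)–(r9). -/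
def isTrue (gn : Sent B → ℕ) (v : B → Bool) (U : Set ℕ) : Sent B → Prop
  | .base b => v b = true
  | .Tr n => ∃ A : Sent B, n = gn A ∧ gn A ∈ U
  | .exT => ∃ n : ℕ, ∃ A : Sent B, n = gn A ∧ gn A ∈ U
  | .allT => ∀ n : ℕ, ∃ A : Sent B, n = gn A ∧ gn A ∈ U
  | .neg A => isFalse gn v U A
  | .or A C => isTrue gn v U A ∨ isTrue gn v U C
  | .and A C => isTrue gn v U A ∧ isTrue gn v U C
  | .imp A C => isFalse gn v U A ∨ isTrue gn v U C
  | .iff A C => (isTrue gn v U A ∧ isTrue gn v U C) ∨ (isFalse gn v U A ∧ isFalse gn v U C)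

/-- `isFalse gn v U A` means `#A ∈ F(U)` according to rules (r1)–(r9). -/
def isFalse (gn : Sent B → ℕ) (v : B → Bool) (U : Set ℕ) : Sent B → Prop
  | .base b => v b = false
  | .Tr n => ∃ A : Sent B, n = gn A ∧ gn (.neg A) ∈ U
  | .exT => ∀ n : ℕ, ∃ A : Sent B, n = gn A ∧ gn (.neg A) ∈ U
  | .allT => ∃ n : ℕ, ∃ A : Sent B, n = gn A ∧ gn (.neg A) ∈ U
  | .neg A => isTrue gn v U A
  | .or A C => isFalse gn v U A ∧ isFalse gn v U C
  | .and A C => isFalse gn v U A ∨ isFalse gn v U C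
  | .imp A C => isTrue gn v U A ∧ isFalse gn v U C
  | .iff A C => (isTrue gn v U A ∧ isFalse gn v U C) ∨ (isFalse gn v U A ∧ isTrue gn v U C)
end

/-- `G U`: Gödel numbers of sentences declared true over `U`. -/
def GSet (gn : Sent B → ℕ) (v : B → Bool) (U : Set ℕ) : Set ℕ :=
  { n | ∃ A : Sent B, n = gn A ∧ isTrue gn v U A }

/-- `F U`: Gödel numbers of sentences declared false over `U`. -/
def FSet (gn : Sent B → ℕ) (v : B → Bool) (U : Set ℕ) : Set ℕ :=
  { n | ∃ A : Sent B, n = gn A ∧ isFalse gn v U A }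

/-- `U` is consistent: no sentence has both itself and its negation in `U`. -/
def Consistent (gn : Sent B → ℕ) (U : Set ℕ) : Prop :=
  ¬ ∃ A : Sent B, gn A ∈ U ∧ gn (.neg A) ∈ U

/-!
`G` is monotone, so by Knaster–Tarski it has a least fixed point `L`, which lies below every
fixed point. `L` is consistent: the part `K` of `L` that contains neither half of a clashing
pair `#A, #¬A ∈ L` satisfies `G(K) ⊆ K`, because a sentence true over `K` cannot be false
over `L`. Hence `L ⊆ K` by leastness, i.e. there are no clashing pairs in `L`.
-/

def Separated (gn : Sent B → ℕ) (U U' : Set ℕ) : Prop :=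
  ∀ A : Sent B, gn A ∈ U → gn (.neg A) ∉ U'

def consistentCore (gn : Sent B → ℕ) (L : Set ℕ) : Set ℕ :=
  {n ∈ L | ∀ A : Sent B, (n = gn A → gn (.neg A) ∉ L) ∧ (n = gn (.neg A) → gn A ∉ L)}

section

variable (gn : Sent B → ℕ) (v : B → Bool)

theorem isTrue_mono_and_isFalse_mono {U U' : Set ℕ} (h : U ⊆ U') (A : Sent B) :
    (isTrue gn v U A → isTrue gn v U' A) ∧ (isFalse gn v U A → isFalse gn v U' A) := by
  induction A with
  | base b => exact ⟨id, id⟩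
  | Tr n => exact ⟨fun ⟨A, hA, hm⟩ => ⟨A, hA, h hm⟩, fun ⟨A, hA, hm⟩ => ⟨A, hA, h hm⟩⟩
  | exT =>
    refine ⟨fun ⟨n, A, hA, hm⟩ => ⟨n, A, hA, h hm⟩, fun hall n => ?_⟩
    obtain ⟨A, hA, hm⟩ := hall n
    exact ⟨A, hA, h hm⟩
  | allT =>
    refine ⟨fun hall n => ?_, fun ⟨n, A, hA, hm⟩ => ⟨n, A, hA, h hm⟩⟩
    obtain ⟨A, hA, hm⟩ := hall n
    exact ⟨A, hA, h hm⟩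
  | neg A ih => exact ⟨ih.2, ih.1⟩
  | or A C ihA ihC => exact ⟨Or.imp ihA.1 ihC.1, And.imp ihA.2 ihC.2⟩
  | and A C ihA ihC => exact ⟨And.imp ihA.1 ihC.1, Or.imp ihA.2 ihC.2⟩
  | imp A C ihA ihC => exact ⟨Or.imp ihA.2 ihC.1, And.imp ihA.1 ihC.2⟩
  | iff A C ihA ihC =>
    exact ⟨Or.imp (And.imp ihA.1 ihC.1) (And.imp ihA.2 ihC.2),
      Or.imp (And.imp ihA.1 ihC.2) (And.imp ihA.2 ihC.1)⟩

theorem GSet_mono : Monotone (GSet gn v) :=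
  fun _ _ h _ ⟨A, hA, hT⟩ => ⟨A, hA, (isTrue_mono_and_isFalse_mono gn v h A).1 hT⟩

def GHom : Set ℕ →o Set ℕ := ⟨GSet gn v, GSet_mono gn v⟩

variable {gn}

variable (hgn : Function.Injective gn)
include hgn

theorem mem_GSet_iff {U : Set ℕ} {A : Sent B} : gn A ∈ GSet gn v U ↔ isTrue gn v U A :=
  ⟨fun ⟨_, hA, hT⟩ => hgn hA ▸ hT, fun hT => ⟨A, rfl, hT⟩⟩

theorem not_isTrue_Tr_and_isFalse_Tr {U U' : Set ℕ} (hUU' : Separated gn U U') (n : ℕ) :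
    ¬ (isTrue gn v U (.Tr n) ∧ isFalse gn v U' (.Tr n)) := by
  rintro ⟨⟨A, rfl, hA⟩, ⟨A', hAA', hA'⟩⟩
  exact hUU' A hA (hgn hAA' ▸ hA')

theorem not_isTrue_and_isFalse (A : Sent B) {U U' : Set ℕ} (hUU' : Separated gn U U')
    (hU'U : Separated gn U' U) : ¬ (isTrue gn v U A ∧ isFalse gn v U' A) := by
  -- negation exchanges the roles of `U` and `U'`
  induction A generalizing U U' with
  | base b => rintro ⟨hT, hF⟩; cases hT.symm.trans hF
  | Tr n => exact not_isTrue_Tr_and_isFalse_Tr v hgn hUU' n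
  | exT => rintro ⟨⟨n, hT⟩, hF⟩; exact not_isTrue_Tr_and_isFalse_Tr v hgn hUU' n ⟨hT, hF n⟩
  | allT => rintro ⟨hT, ⟨n, hF⟩⟩; exact not_isTrue_Tr_and_isFalse_Tr v hgn hUU' n ⟨hT n, hF⟩
  | neg A ih => exact fun ⟨hT, hF⟩ => ih hU'U hUU' ⟨hF, hT⟩
  | or A C ihA ihC =>
    rintro ⟨hA | hC, hFA, hFC⟩
    exacts [ihA hUU' hU'U ⟨hA, hFA⟩, ihC hUU' hU'U ⟨hC, hFC⟩]
  | and A C ihA ihC =>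
    rintro ⟨⟨hA, hC⟩, hFA | hFC⟩
    exacts [ihA hUU' hU'U ⟨hA, hFA⟩, ihC hUU' hU'U ⟨hC, hFC⟩]
  | imp A C ihA ihC =>
    rintro ⟨hFA | hC, hA, hFC⟩
    exacts [ihA hU'U hUU' ⟨hA, hFA⟩, ihC hUU' hU'U ⟨hC, hFC⟩]
  | iff A C ihA ihC =>
    rintro ⟨⟨hA, hC⟩ | ⟨hFA, hFC⟩, ⟨hA', hFC'⟩ | ⟨hFA', hC'⟩⟩
    exacts [ihC hUU' hU'U ⟨hC, hFC'⟩, ihA hUU' hU'U ⟨hA, hFA'⟩,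
      ihA hU'U hUU' ⟨hA', hFA⟩, ihC hU'U hUU' ⟨hC', hFC⟩]

theorem GSet_consistentCore_subset {L : Set ℕ} (hL : GSet gn v L = L) :
    GSet gn v (consistentCore gn L) ⊆ consistentCore gn L := by
  set K := consistentCore gn L
  have hKL : Separated gn K L := fun A hA => (hA.2 A).1 rfl
  have hLK : Separated gn L K := fun A hA hnA => (hnA.2 A).2 rfl hA
  rintro _ ⟨C, rfl, hC⟩
  refine ⟨hL ▸ GSet_mono gn v (fun _ hn => hn.1) ⟨C, rfl, hC⟩, fun A => ⟨?_, ?_⟩⟩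
  · rintro hCA hnA
    obtain rfl := hgn hCA
    rw [← hL, mem_GSet_iff v hgn] at hnA
    exact not_isTrue_and_isFalse v hgn C hKL hLK ⟨hC, hnA⟩
  · rintro hCA hA
    obtain rfl := hgn hCA
    rw [← hL, mem_GSet_iff v hgn] at hA
    exact not_isTrue_and_isFalse v hgn A hLK hKL ⟨hA, hC⟩

theorem consistent_lfp_GHom : Consistent gn (GHom gn v).lfp := by
  rintro ⟨A, hA, hnA⟩
  have hcore : (GHom gn v).lfp ⊆ consistentCore gn (GHom gn v).lfp :=
    OrderHom.lfp_le _ (GSet_consistentCore_subset v hgn (GHom gn v).map_lfp)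
  exact ((hcore hA).2 A).1 rfl hnA

end

/-- There exists a smallest consistent fixed point of `G`. -/
theorem stmt_7 {B : Type} (gn : Sent B → ℕ) (hgn : Function.Injective gn)
    (v : B → Bool) :
    ∃ U : Set ℕ, Consistent gn U ∧ GSet gn v U = U ∧
      ∀ U' : Set ℕ, Consistent gn U' → GSet gn v U' = U' → U ⊆ U' :=
  ⟨(GHom gn v).lfp, consistent_lfp_GHom v hgn, (GHom gn v).map_lfp,
    fun _ _ hU' => OrderHom.lfp_le_fixed (GHom gn v) hU'⟩
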